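/- Let A be an n×n entrywise nonnegative matrix, n ≥ 2, and S a nonempty proper subset of indices. Then ρ(A) ≤ max{η₁, η₂, η₃, η₄}, where η₁ = max_{i∈S}(A i i + r_i^S(A)), η₂ = max_{i∈S̄}(A i i + r_i^{S̄}(A)), η₃ = max_{i∈S, j∈S̄} min{ (A i i + A j j + r_i^S(A) + r_j^{S̄}(A) + √((A i i - A j j + r_i^S(A) - r_j^{S̄}(A))² + 4 r_i^{S̄}(A) r_j^S(A)))/2 , R_i(A) }, and η₄ is the symmetric expression with S and S̄ swapped, assuming ρ(A) is an eigenvalue of A. -/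

import Mathlib

/-!
Let `v` be an eigenvector for `ρ` and `f i = ‖v i‖`. Triangle inequality in the `i`-th row gives
`(ρ - A i i) f i ≤ r_i^S(A) f p + r_i^{S̄}(A) f q`, where `p` and `q` maximize `f` on `S` and on `S̄`.
Say `f q ≤ f p`, so `f p > 0`. At `i = p` this gives `ρ ≤ R_p(A)`. Multiplying the inequalities
at `p` and `q` gives `(ρ - a)(ρ - b) ≤ r_p^{S̄}(A) r_q^S(A)` with `a = A p p + r_p^S(A)` and
`b = A q q + r_q^{S̄}(A)`, as long as `ρ > max a b`. So `ρ` is at most the largest root of this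
quadratic, which is the `(p, q)` term of `η₃`. If `f p ≤ f q`, the same argument gives a term of `η₄`.
-/

/-- `μ` is an eigenvalue (over `ℂ`) of the real matrix `A`. -/
def IsEigOfReal {n : ℕ} (A : Matrix (Fin n) (Fin n) ℝ) (μ : ℂ) : Prop :=
  ∃ v : Fin n → ℂ, v ≠ 0 ∧ (A.map (Complex.ofReal ·)).mulVec v = μ • v

/-- `r_i^T(A) = ∑_{j ∈ T, j ≠ i} A i j` for a nonnegative matrix. -/
def rT {n : ℕ} (A : Matrix (Fin n) (Fin n) ℝ) (T : Finset (Fin n)) (i : Fin n) : ℝ :=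
  ∑ j ∈ T.erase i, A i j

open Finset

/-- The largest root of `(t - a) * (t - b) = c`. -/
noncomputable def quadRoot (a b c : ℝ) : ℝ :=
  (a + b + Real.sqrt ((a - b) ^ 2 + 4 * c)) / 2

lemma max_le_quadRoot {a b c : ℝ} (hc : 0 ≤ c) : max a b ≤ quadRoot a b c := by
  have h : |a - b| ≤ Real.sqrt ((a - b) ^ 2 + 4 * c) := by
    rw [← Real.sqrt_sq_eq_abs]
    exact Real.sqrt_le_sqrt (by linarith)
  rw [quadRoot, max_def]
  split_ifs <;> cases abs_cases (a - b) <;> linarith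

lemma le_quadRoot_of_mul_sub_le {a b c t : ℝ} (hc : 0 ≤ c) (h : (t - a) * (t - b) ≤ c) :
    t ≤ quadRoot a b c := by
  set s := Real.sqrt ((a - b) ^ 2 + 4 * c)
  have hs : 0 ≤ s := Real.sqrt_nonneg _
  have hs2 : s ^ 2 = (a - b) ^ 2 + 4 * c := Real.sq_sqrt (by positivity)
  by_contra! hlt
  rw [quadRoot] at hlt
  nlinarith [mul_pos (show 0 < 2 * t - a - b - s by linarith)
    (show 0 < 2 * t - a - b + s by linarith)]

lemma le_min_quadRoot_of_row_bounds {t d₁ s₁ t₁ d₂ s₂ t₂ x y : ℝ} (ht₁ : 0 ≤ t₁) (ht₂ : 0 ≤ t₂)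
    (hx : 0 < x) (hy : 0 ≤ y) (hyx : y ≤ x)
    (h₁ : (t - d₁) * x ≤ s₁ * x + t₁ * y) (h₂ : (t - d₂) * y ≤ t₂ * x + s₂ * y) :
    t ≤ min ((d₁ + d₂ + s₁ + s₂ + Real.sqrt ((d₁ - d₂ + s₁ - s₂) ^ 2 + 4 * t₁ * t₂)) / 2)
      (d₁ + s₁ + t₁) := by
  have hroot : (d₁ + d₂ + s₁ + s₂ + Real.sqrt ((d₁ - d₂ + s₁ - s₂) ^ 2 + 4 * t₁ * t₂)) / 2
      = quadRoot (d₁ + s₁) (d₂ + s₂) (t₁ * t₂) := by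
    rw [quadRoot]; ring_nf
  have hc : 0 ≤ t₁ * t₂ := mul_nonneg ht₁ ht₂
  refine le_min ?_ ?_
  · rw [hroot]
    by_cases hmax : t ≤ max (d₁ + s₁) (d₂ + s₂)
    · exact hmax.trans (max_le_quadRoot hc)
    obtain ⟨ha, hb⟩ : d₁ + s₁ < t ∧ d₂ + s₂ < t := by simpa using hmax
    have hy' : 0 < y := by
      by_contra! hy0
      nlinarith [le_antisymm hy0 hy]
    refine le_quadRoot_of_mul_sub_le hc (le_of_mul_le_mul_right ?_ (mul_pos hx hy'))
    calc (t - (d₁ + s₁)) * (t - (d₂ + s₂)) * (x * y)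
        = ((t - (d₁ + s₁)) * x) * ((t - (d₂ + s₂)) * y) := by ring
      _ ≤ (t₁ * y) * (t₂ * x) :=
          mul_le_mul (by linarith) (by linarith) (by nlinarith) (by positivity)
      _ = t₁ * t₂ * (x * y) := by ring
  · nlinarith [mul_le_mul_of_nonneg_left hyx ht₁]

lemma sub_diag_mul_norm_le_sum {ι : Type*} [Fintype ι] [DecidableEq ι] {A : Matrix ι ι ℝ}
    (hA : ∀ i j, 0 ≤ A i j) {μ : ℝ} {v : ι → ℂ}
    (hv : (A.map (Complex.ofReal ·)).mulVec v = (μ : ℂ) • v) (i : ι) :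
    (μ - A i i) * ‖v i‖ ≤ ∑ j ∈ univ.erase i, A i j * ‖v j‖ := by
  have hrow : ((μ - A i i : ℝ) : ℂ) * v i = ∑ j ∈ univ.erase i, (A i j : ℂ) * v j := by
    have h := congrFun hv i
    simp only [Matrix.mulVec, dotProduct, Matrix.map_apply, Pi.smul_apply, smul_eq_mul] at h
    rw [sum_erase_eq_sub (mem_univ i), h]
    push_cast; ring
  calc (μ - A i i) * ‖v i‖ ≤ ‖((μ - A i i : ℝ) : ℂ) * v i‖ := by
        rw [norm_mul, Complex.norm_real, Real.norm_eq_abs]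
        exact mul_le_mul_of_nonneg_right (le_abs_self _) (norm_nonneg _)
    _ ≤ ∑ j ∈ univ.erase i, ‖(A i j : ℂ) * v j‖ := hrow ▸ norm_sum_le _ _
    _ = ∑ j ∈ univ.erase i, A i j * ‖v j‖ := by
        simp only [norm_mul, Complex.norm_real, Real.norm_of_nonneg (hA i _)]

section
variable {n : ℕ} {A : Matrix (Fin n) (Fin n) ℝ}

lemma rT_nonneg (hA : ∀ i j, 0 ≤ A i j) (T : Finset (Fin n)) (i : Fin n) : 0 ≤ rT A T i :=
  sum_nonneg fun j _ => hA i j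

lemma sum_erase_mul_le_rT (hA : ∀ i j, 0 ≤ A i j) (S : Finset (Fin n)) {x : Fin n → ℝ}
    {M M' : ℝ} (hM : ∀ j ∈ S, x j ≤ M) (hM' : ∀ j ∈ Sᶜ, x j ≤ M') (i : Fin n) :
    ∑ j ∈ univ.erase i, A i j * x j ≤ rT A S i * M + rT A Sᶜ i * M' := by
  have hdisj : Disjoint (S.erase i) (Sᶜ.erase i) :=
    disjoint_compl_right.mono (erase_subset _ _) (erase_subset _ _)
  rw [← union_compl S, erase_union_distrib, sum_union hdisj, rT, rT, sum_mul, sum_mul]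
  gcongr with j hj j hj
  · exact hA i j
  · exact hM j (mem_of_mem_erase hj)
  · exact hA i j
  · exact hM' j (mem_of_mem_erase hj)

end

theorem stmt_15_general {n : ℕ} (A : Matrix (Fin n) (Fin n) ℝ)
    (hA : ∀ i j, 0 ≤ A i j)
    (S : Finset (Fin n)) (hS : S.Nonempty) (hSc : Sᶜ.Nonempty)
    (ρ : ℝ)
    (hρeig : IsEigOfReal A (ρ : ℂ)) :
    ρ ≤ max
      (max (S.sup' hS (fun i => A i i + rT A S i))
        (Sᶜ.sup' hSc (fun i => A i i + rT A Sᶜ i)))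
      (max
        ((S ×ˢ Sᶜ).sup' (hS.product hSc) (fun p =>
          min ((A p.1 p.1 + A p.2 p.2 + rT A S p.1 + rT A Sᶜ p.2 +
              Real.sqrt ((A p.1 p.1 - A p.2 p.2 + rT A S p.1 - rT A Sᶜ p.2) ^ 2 +
                4 * rT A Sᶜ p.1 * rT A S p.2)) / 2)
            (A p.1 p.1 + rT A S p.1 + rT A Sᶜ p.1)))
        ((Sᶜ ×ˢ S).sup' (hSc.product hS) (fun p =>
          min ((A p.1 p.1 + A p.2 p.2 + rT A Sᶜ p.1 + rT A S p.2 +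
              Real.sqrt ((A p.1 p.1 - A p.2 p.2 + rT A Sᶜ p.1 - rT A S p.2) ^ 2 +
                4 * rT A S p.1 * rT A Sᶜ p.2)) / 2)
            (A p.1 p.1 + rT A S p.1 + rT A Sᶜ p.1)))) := by
  obtain ⟨v, hv0, hv⟩ := hρeig
  obtain ⟨p, hp, hpmax⟩ := S.exists_max_image (‖v ·‖) hS
  obtain ⟨q, hq, hqmax⟩ := Sᶜ.exists_max_image (‖v ·‖) hSc
  have hrow (i : Fin n) : (ρ - A i i) * ‖v i‖ ≤ rT A S i * ‖v p‖ + rT A Sᶜ i * ‖v q‖ :=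
    (sub_diag_mul_norm_le_sum hA hv i).trans (sum_erase_mul_le_rT hA S hpmax hqmax i)
  have hpos : 0 < max ‖v p‖ ‖v q‖ := by
    obtain ⟨i, hi⟩ := Function.ne_iff.mp hv0
    refine (norm_pos_iff.mpr hi).trans_le ?_
    by_cases hiS : i ∈ S
    · exact (hpmax i hiS).trans (le_max_left _ _)
    · exact (hqmax i (mem_compl.mpr hiS)).trans (le_max_right _ _)
  refine le_max_of_le_right ?_
  rcases le_total ‖v q‖ ‖v p‖ with hqp | hpq
  · refine le_max_of_le_left (le_trans ?_ (le_sup' _ (b := (p, q)) (mem_product.mpr ⟨hp, hq⟩)))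
    exact le_min_quadRoot_of_row_bounds (rT_nonneg hA _ _) (rT_nonneg hA _ _)
      (by simpa [hqp] using hpos) (norm_nonneg _) hqp (hrow p) (hrow q)
  · refine le_max_of_le_right (le_trans ?_ (le_sup' _ (b := (q, p)) (mem_product.mpr ⟨hq, hp⟩)))
    dsimp only
    rw [add_right_comm (A q q) (rT A S q)]
    exact le_min_quadRoot_of_row_bounds (rT_nonneg hA _ _) (rT_nonneg hA _ _)
      (by simpa [hpq] using hpos) (norm_nonneg _) hpq
      ((hrow q).trans_eq (add_comm _ _)) ((hrow p).trans_eq (add_comm _ _))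

theorem stmt_15 {n : ℕ} (hn : 2 ≤ n) (A : Matrix (Fin n) (Fin n) ℝ)
    (hA : ∀ i j, 0 ≤ A i j)
    (S : Finset (Fin n)) (hS : S.Nonempty) (hSc : Sᶜ.Nonempty)
    (ρ : ℝ)
    (hρ : IsGreatest {r : ℝ | ∃ μ : ℂ, IsEigOfReal A μ ∧ r = ‖μ‖} ρ)
    (hρeig : IsEigOfReal A (ρ : ℂ)) :
    ρ ≤ max
      (max (S.sup' hS (fun i => A i i + rT A S i))
        (Sᶜ.sup' hSc (fun i => A i i + rT A Sᶜ i)))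
      (max
        ((S ×ˢ Sᶜ).sup' (hS.product hSc) (fun p =>
          min ((A p.1 p.1 + A p.2 p.2 + rT A S p.1 + rT A Sᶜ p.2 +
              Real.sqrt ((A p.1 p.1 - A p.2 p.2 + rT A S p.1 - rT A Sᶜ p.2) ^ 2 +
                4 * rT A Sᶜ p.1 * rT A S p.2)) / 2)
            (A p.1 p.1 + rT A S p.1 + rT A Sᶜ p.1)))
        ((Sᶜ ×ˢ S).sup' (hSc.product hS) (fun p =>
          min ((A p.1 p.1 + A p.2 p.2 + rT A Sᶜ p.1 + rT A S p.2 +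
              Real.sqrt ((A p.1 p.1 - A p.2 p.2 + rT A Sᶜ p.1 - rT A S p.2) ^ 2 +
                4 * rT A S p.1 * rT A Sᶜ p.2)) / 2)
            (A p.1 p.1 + rT A S p.1 + rT A Sᶜ p.1)))) :=
  stmt_15_general A hA S hS hSc ρ hρeig
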